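/- Let (M,r) be a complex manifold, where r: TM → TM is the almost complex structure (r² = −id, N_r = 0). Then the Dolbeault operator of the holomorphic tangent bundle T^{1,0}M, transported to TM via the isomorphism Ψ: X ↦ X − i r(X), equals the generalized derivation D^{r,T}: explicitly, D^{r,T}_Y(X) = i Ψ^{-1}(∂̄_{Y + i r(Y)}(Ψ(X))), where ∂̄_{Y+ir(Y)}(X − ir(X)) = pr^{1,0}[Y + i r(Y), X − i r(X)]. -/
import Mathlib


/-- Vector fields on `M`, modeled as derivations of `R = C^∞(M)`. -/
abbrev VectorField (R : Type*) [CommRing R] [Algebra ℝ R] := Derivation ℝ R R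

/-- Complexified vector fields `X + iY`, modeled as pairs `(X, Y)`. -/
abbrev CVectorField (R : Type*) [CommRing R] [Algebra ℝ R] :=
  VectorField R × VectorField R

variable {R : Type*} [CommRing R] [Algebra ℝ R]

/-- The (ℂ-bilinear) Lie bracket of complexified vector fields. -/
def cbr (U V : CVectorField R) : CVectorField R :=
  (⁅U.1, V.1⁆ - ⁅U.2, V.2⁆, ⁅U.1, V.2⁆ + ⁅U.2, V.1⁆)

/-- Multiplication by `i` on complexified vector fields. -/
def iMul (U : CVectorField R) : CVectorField R := (-U.2, U.1)

/-- The ℂ-linear extension of `r` to complexified vector fields. -/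
def rC (r : VectorField R →ₗ[R] VectorField R) (U : CVectorField R) : CVectorField R :=
  (r U.1, r U.2)

/-- The projection `pr^{1,0} = (1/2)(id − i r)` onto the `(1,0)`-part. -/
noncomputable def pr10 (r : VectorField R →ₗ[R] VectorField R)
    (U : CVectorField R) : CVectorField R :=
  (1 / 2 : ℝ) • (U - iMul (rC r U))

/-- The isomorphism `Ψ : TM → T^{1,0}M`, `Ψ(X) = X − i r(X)`. -/
def Psi (r : VectorField R →ₗ[R] VectorField R) (X : VectorField R) : CVectorField R :=
  (X, -(r X))

/-- `D^{r,T}_Y(X) = [X, r(Y)] − r([X, Y])`. -/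
def DrT (r : VectorField R →ₗ[R] VectorField R) (Y X : VectorField R) : VectorField R :=
  ⁅X, r Y⁆ - r ⁅X, Y⁆

/-- on a complex manifold `(M, r)` (so `r² = −id` and `N_r = 0`), the
Dolbeault operator of the holomorphic tangent bundle `T^{1,0}M`, transported to `TM`
via `Ψ(X) = X − i r(X)`, equals `D^{r,T}`:
`Ψ(D^{r,T}_Y(X)) = i ∂̄_{Y + i r(Y)}(Ψ(X))`, where
`∂̄_{Y+ir(Y)}(X − ir(X)) = pr^{1,0}[Y + i r(Y), X − i r(X)]`. -/
theorem dolbeault_of_tangent_is_DrT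
    (r : VectorField R →ₗ[R] VectorField R)
    (hr2 : ∀ X, r (r X) = -X)
    (hNij : ∀ X Y : VectorField R,
      ⁅r X, r Y⁆ - r ⁅r X, Y⁆ - r ⁅X, r Y⁆ + r (r ⁅X, Y⁆) = 0) :
    ∀ X Y : VectorField R,
      Psi r (DrT r Y X) = iMul (pr10 r (cbr (Y, r Y) (Psi r X))) := by
  intro X Y
  have half : ∀ (a b : VectorField R), b = a + a → a = (1 / 2 : ℝ) • b := by
    intro a b h
    rw [h, smul_add, ← add_smul]
    norm_num
  have h := hNij Y X
  rw [hr2] at h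
  have h1 : ⁅r Y, r X⁆ = ⁅Y, X⁆ + r ⁅r Y, X⁆ + r ⁅Y, r X⁆ := by
    rw [← sub_eq_zero, ← h]; abel
  have h2 : r ⁅r Y, r X⁆ = r ⁅Y, X⁆ - ⁅r Y, X⁆ - ⁅Y, r X⁆ := by
    have hc := congrArg r h1
    rw [map_add, map_add, hr2, hr2] at hc
    rw [hc]; abel
  have hs1 : ⁅X, r Y⁆ = -⁅r Y, X⁆ := (lie_skew X (r Y)).symm
  have hs2 : ⁅X, Y⁆ = -⁅Y, X⁆ := (lie_skew X Y).symm
  simp only [Psi, DrT, iMul, pr10, cbr, rC, Prod.mk.injEq, Prod.smul_mk, Prod.mk_sub_mk,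
    lie_neg, neg_lie, map_sub, map_add, map_neg, hr2, hs1, hs2]
  constructor
  · rw [← smul_neg]
    apply half
    rw [h2]
    abel
  · apply half
    rw [h1]
    abel
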